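/- For every integer d ≥ 2, (1/π)·∫_{−π}^{π} φ⁴·u_d(φ) dφ ≤ (1/4 + (d+1)π²/(16(d+2)²))·π⁶/(d+2)³, and this quantity is at most π⁶/(2(d+2)³). -/

import Mathlib

/-!
Up to the factor `d + 2`, the Jackson kernel is the squared modulus of the trigonometric polynomial
`∑_{k ≤ d} sin ((k + 1) α) e^{i k φ}` with `α = π / (d + 2)`, hence nonnegative. On `[-π, π]`
the bound `cos φ ≤ 1 - 2 φ² / π²` gives `φ⁴ ≤ π⁴ / 4 · (1 - cos φ)²`, and by orthogonality the
integral of `(1 - cos φ)² u_d` only sees `ρ₁ = cos α` and `ρ₂`: it equals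
`π (2c + (d + 1) c²) / (d + 2)` with `c = 1 - cos α ≤ α² / 2`.
-/

open Real

/-- The Jackson damping factor `ρ_{j,d}`. -/
noncomputable def jacksonDamp (d j : ℕ) : ℝ :=
  Real.sin ((j + 1) * (π / (d + 2))) / ((d + 2) * Real.sin (π / (d + 2)))
    + (1 - (j + 1) / (d + 2)) * Real.cos (j * (π / (d + 2)))

/-- The Jackson kernel `u_d(φ) = 1/2 + Σ_{j=1}^d ρ_{j,d} cos(jφ)`. -/
noncomputable def jacksonKernel (d : ℕ) (φ : ℝ) : ℝ :=
  1 / 2 + ∑ j ∈ Finset.Icc 1 d, jacksonDamp d j * Real.cos (j * φ)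

open Finset intervalIntegral

theorem sum_mul_cos_sq_add_sum_mul_sin_sq (s : ℕ → ℝ) (φ : ℝ) (n : ℕ) :
    (∑ k ∈ range (n + 1), s k * cos (k * φ)) ^ 2 + (∑ k ∈ range (n + 1), s k * sin (k * φ)) ^ 2 =
      ∑ k ∈ range (n + 1), s k ^ 2 +
        2 * ∑ j ∈ Icc 1 n, (∑ l ∈ range (n + 1 - j), s l * s (l + j)) * cos (j * φ) := by
  induction n with
  | zero => simp
  | succ n ih =>
    have cross : (∑ k ∈ range (n + 1), s k * cos (k * φ)) * cos ((n + 1 : ℕ) * φ) +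
        (∑ k ∈ range (n + 1), s k * sin (k * φ)) * sin ((n + 1 : ℕ) * φ) =
        ∑ j ∈ Icc 1 (n + 1), s (n + 1 - j) * cos (j * φ) := by
      simp only [sum_mul, ← sum_add_distrib]
      refine sum_nbij' (fun k => n + 1 - k) (fun j => n + 1 - j) ?_ ?_ ?_ ?_ fun k hk => ?_
      any_goals (intro i hi; simp only [mem_range, mem_Icc] at hi ⊢; omega)
      rw [mem_range] at hk
      rw [show n + 1 - (n + 1 - k) = k by omega, Nat.cast_sub hk.le, sub_mul, cos_sub]
      ring
    have coeff : ∀ j ∈ Icc 1 (n + 1), ∑ l ∈ range (n + 1 + 1 - j), s l * s (l + j) =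
        ∑ l ∈ range (n + 1 - j), s l * s (l + j) + s (n + 1 - j) * s (n + 1) := by
      intro j hj
      have hj : 1 ≤ j ∧ j ≤ n + 1 := by simpa using hj
      rw [show n + 1 + 1 - j = n + 1 - j + 1 by omega, sum_range_succ,
        show n + 1 - j + j = n + 1 by omega]
    rw [sum_range_succ _ (n + 1), sum_range_succ _ (n + 1), sum_range_succ _ (n + 1),
      sum_congr rfl fun (j : ℕ) hj => congrArg (· * cos (j * φ)) (coeff j hj)]
    simp only [add_mul, sum_add_distrib]
    rw [sum_Icc_succ_top (by omega) (fun j => (∑ l ∈ range (n + 1 - j), s l * s (l + j)) * cos (j * φ)),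
      Nat.sub_self, sum_range_zero, zero_mul, add_zero]
    simp only [mul_right_comm _ (s (n + 1)), ← sum_mul, ← cross]
    linear_combination ih + s (n + 1) ^ 2 * sin_sq_add_cos_sq (((n + 1 : ℕ) : ℝ) * φ)

theorem two_mul_sin_mul_sum_range_cos (θ α : ℝ) (n : ℕ) :
    2 * sin α * ∑ l ∈ range n, cos (θ + 2 * l * α) = sin (θ + (2 * n - 1) * α) - sin (θ - α) := by
  have step : ∀ l : ℕ, 2 * sin α * cos (θ + 2 * l * α) =
      sin (θ + (2 * (l + 1 : ℕ) - 1) * α) - sin (θ + (2 * l - 1) * α) := by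
    intro l
    rw [sin_sub_sin]
    push_cast
    ring_nf
  rw [mul_sum, sum_congr rfl fun l _ => step l,
    sum_range_sub (fun l : ℕ => sin (θ + (2 * (l : ℝ) - 1) * α))]
  norm_num [sub_eq_add_neg]

theorem sin_pi_div_nat_add_two_pos (d : ℕ) : 0 < sin (π / (d + 2)) :=
  sin_pos_of_pos_of_lt_pi (by positivity) (div_lt_self pi_pos (by linarith [d.cast_nonneg (α := ℝ)]))

theorem jacksonDamp_zero (d : ℕ) : jacksonDamp d 0 = 1 := by
  have := (sin_pi_div_nat_add_two_pos d).ne'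
  simp only [jacksonDamp, CharP.cast_eq_zero, zero_add, zero_mul, cos_zero, one_mul, mul_one]
  field_simp
  ring

theorem sum_sin_mul_sin_eq_jacksonDamp (d j : ℕ) (hj : j ≤ d) :
    ∑ l ∈ range (d + 1 - j), sin ((l + 1) * (π / (d + 2))) * sin ((l + j + 1) * (π / (d + 2))) =
      (d + 2) / 2 * jacksonDamp d j := by
  rw [jacksonDamp]
  set α := π / (d + 2)
  have hsin : sin α ≠ 0 := (sin_pi_div_nat_add_two_pos d).ne'
  have hlen : ((d + 1 - j : ℕ) : ℝ) = d + 1 - j := by rw [Nat.cast_sub (by omega)]; push_cast; ring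
  have prod : ∀ l : ℕ, sin ((l + 1) * α) * sin ((l + j + 1) * α) =
      (cos (j * α) - cos ((j + 2) * α + 2 * l * α)) / 2 := by
    intro l
    rw [show (j : ℝ) * α = (l + j + 1) * α - (l + 1) * α by ring,
      show (j + 2) * α + 2 * l * α = (l + j + 1) * α + (l + 1) * α by ring, cos_sub, cos_add]
    ring
  have tele := two_mul_sin_mul_sum_range_cos ((j + 2) * α) α (d + 1 - j)
  rw [hlen, show (j + 2) * α + (2 * (d + 1 - j) - 1) * α = 2 * π - (j + 1) * α by
      simp only [α]; field_simp; ring, sin_two_pi_sub,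
    show (j + 2) * α - α = (j + 1) * α by ring] at tele
  have hsum : ∑ l ∈ range (d + 1 - j), cos ((j + 2) * α + 2 * l * α) = -sin ((j + 1) * α) / sin α := by
    rw [eq_div_iff hsin]
    linear_combination tele / 2
  rw [sum_congr rfl fun l _ => prod l, ← sum_div, sum_sub_distrib, sum_const, card_range,
    nsmul_eq_mul, hlen, hsum]
  field_simp
  ring

theorem jacksonKernel_eq_sq_add_sq (d : ℕ) (φ : ℝ) :
    (d + 2) * jacksonKernel d φ =
      (∑ k ∈ range (d + 1), sin ((k + 1) * (π / (d + 2))) * cos (k * φ)) ^ 2 +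
        (∑ k ∈ range (d + 1), sin ((k + 1) * (π / (d + 2))) * sin (k * φ)) ^ 2 := by
  have autocorr : ∀ j ≤ d, ∑ l ∈ range (d + 1 - j),
      sin ((l + 1) * (π / (d + 2))) * sin (((l + j : ℕ) + 1) * (π / (d + 2))) =
        (d + 2) / 2 * jacksonDamp d j := by
    intro j hj
    push_cast
    exact sum_sin_mul_sin_eq_jacksonDamp d j hj
  have diag := autocorr 0 (Nat.zero_le d)
  simp only [add_zero, Nat.sub_zero, jacksonDamp_zero, mul_one, ← sq] at diag
  rw [sum_mul_cos_sq_add_sum_mul_sin_sq (fun k => sin ((k + 1) * (π / (d + 2)))), diag,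
    sum_congr rfl fun j hj => by rw [autocorr j (mem_Icc.mp hj).2], jacksonKernel, mul_add, mul_sum, mul_sum]
  congr 1
  · ring
  · exact sum_congr rfl fun j _ => by ring

theorem jacksonKernel_nonneg (d : ℕ) (φ : ℝ) : 0 ≤ jacksonKernel d φ := by
  have h : 0 ≤ (d + 2) * jacksonKernel d φ := by rw [jacksonKernel_eq_sq_add_sq]; positivity
  exact nonneg_of_mul_nonneg_right h (by positivity)

theorem continuous_jacksonKernel (d : ℕ) : Continuous (jacksonKernel d) := by
  unfold jacksonKernel
  fun_prop

theorem integral_cos_int_mul (m : ℤ) :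
    ∫ φ in (-π)..π, cos (m * φ) = if m = 0 then 2 * π else 0 := by
  split_ifs with hm
  · simp only [hm, Int.cast_zero, zero_mul, cos_zero, integral_const, sub_neg_eq_add, smul_eq_mul,
      mul_one, two_mul]
  · have hm' : (m : ℝ) ≠ 0 := by exact_mod_cast hm
    rw [integral_comp_mul_left (fun x => cos x) hm', integral_cos, mul_neg, sin_neg,
      sin_int_mul_pi]
    simp

theorem integral_cos_nat_mul_mul_cos_nat_mul (k : ℕ) {j : ℕ} (hj : j ≠ 0) :
    ∫ φ in (-π)..π, cos (k * φ) * cos (j * φ) = if k = j then π else 0 := by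
  have prod : ∀ φ : ℝ, cos (k * φ) * cos (j * φ) =
      cos (((k + j : ℤ) : ℝ) * φ) / 2 + cos (((k - j : ℤ) : ℝ) * φ) / 2 := by
    intro φ
    push_cast
    rw [add_mul, sub_mul, cos_add, cos_sub]
    ring
  simp_rw [prod]
  rw [integral_add ((by fun_prop : Continuous _).intervalIntegrable _ _)
    ((by fun_prop : Continuous _).intervalIntegrable _ _), integral_div, integral_div,
    integral_cos_int_mul, integral_cos_int_mul]
  split_ifs <;> first | omega | ring

theorem integral_cos_mul_jacksonKernel {d k : ℕ} (hk : k ≤ d) :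
    ∫ φ in (-π)..π, cos (k * φ) * jacksonKernel d φ = π * jacksonDamp d k := by
  have orth : ∀ j ∈ Icc 1 d, ∫ φ in (-π)..π, cos (k * φ) * (jacksonDamp d j * cos (j * φ)) =
      if k = j then jacksonDamp d k * π else 0 := by
    intro j hj
    simp_rw [mul_left_comm (cos (k * _))]
    rw [integral_const_mul, integral_cos_nat_mul_mul_cos_nat_mul k (by grind)]
    split_ifs with h
    · rw [h]
    · exact mul_zero _
  simp only [jacksonKernel, mul_add, mul_sum]
  rw [integral_add ((by fun_prop : Continuous _).intervalIntegrable _ _)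
      ((by fun_prop : Continuous _).intervalIntegrable _ _),
    integral_finsetSum fun j _ => (by fun_prop : Continuous _).intervalIntegrable _ _,
    sum_congr rfl orth, sum_ite_eq, integral_mul_const, ← Int.cast_natCast, integral_cos_int_mul]
  rcases Nat.eq_zero_or_pos k with rfl | hk0
  · rw [if_pos Nat.cast_zero, if_neg (by simp), jacksonDamp_zero]
    ring
  · rw [if_neg (by omega), if_pos (mem_Icc.mpr ⟨hk0, hk⟩)]
    ring

theorem jacksonDamp_one (d : ℕ) : jacksonDamp d 1 = cos (π / (d + 2)) := by
  have := (sin_pi_div_nat_add_two_pos d).ne'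
  rw [jacksonDamp, Nat.cast_one, one_add_one_eq_two, sin_two_mul]
  field_simp
  ring

theorem jacksonDamp_two (d : ℕ) :
    jacksonDamp d 2 = (1 + (d + 1) * cos (2 * (π / (d + 2)))) / (d + 2) := by
  have := (sin_pi_div_nat_add_two_pos d).ne'
  rw [jacksonDamp, Nat.cast_ofNat, show (2 + 1 : ℝ) = 3 by norm_num, sin_three_mul, cos_two_mul]
  field_simp
  linear_combination -4 * sin_sq_add_cos_sq (π / (d + 2))

theorem integral_one_sub_cos_sq_mul_jacksonKernel {d : ℕ} (hd : 2 ≤ d) :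
    ∫ φ in (-π)..π, (1 - cos φ) ^ 2 * jacksonKernel d φ =
      π * (2 * (1 - cos (π / (d + 2))) + (d + 1) * (1 - cos (π / (d + 2))) ^ 2) / (d + 2) := by
  have expand : ∀ φ, (1 - cos φ) ^ 2 * jacksonKernel d φ =
      3 / 2 * (cos ((0 : ℕ) * φ) * jacksonKernel d φ) - 2 * (cos ((1 : ℕ) * φ) * jacksonKernel d φ) +
        1 / 2 * (cos ((2 : ℕ) * φ) * jacksonKernel d φ) := by
    intro φ
    push_cast
    rw [cos_two_mul]
    simp only [zero_mul, cos_zero, one_mul]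
    ring
  have hint : ∀ k : ℕ, IntervalIntegrable (fun φ => cos (k * φ) * jacksonKernel d φ)
      MeasureTheory.volume (-π) π := fun k =>
    (by have := continuous_jacksonKernel d; fun_prop : Continuous _).intervalIntegrable _ _
  simp_rw [expand]
  rw [integral_add (((hint 0).const_mul _).sub ((hint 1).const_mul _)) ((hint 2).const_mul _),
    integral_sub ((hint 0).const_mul _) ((hint 1).const_mul _), integral_const_mul,
    integral_const_mul, integral_const_mul, integral_cos_mul_jacksonKernel (Nat.zero_le d),
    integral_cos_mul_jacksonKernel (by omega), integral_cos_mul_jacksonKernel hd,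
    jacksonDamp_zero, jacksonDamp_one, jacksonDamp_two, cos_two_mul]
  field_simp
  ring

theorem pow_four_le_mul_one_sub_cos_sq {φ : ℝ} (h : |φ| ≤ π) :
    φ ^ 4 ≤ π ^ 4 / 4 * (1 - cos φ) ^ 2 := by
  have h1 : 2 / π ^ 2 * φ ^ 2 ≤ 1 - cos φ := by linarith [cos_le_one_sub_mul_cos_sq h]
  have h2 := pow_le_pow_left₀ (by positivity) h1 2
  calc φ ^ 4 = π ^ 4 / 4 * (2 / π ^ 2 * φ ^ 2) ^ 2 := by field_simp; ring
    _ ≤ π ^ 4 / 4 * (1 - cos φ) ^ 2 := by gcongr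

theorem integral_pow_four_mul_jacksonKernel_le (d : ℕ) :
    ∫ φ in (-π)..π, φ ^ 4 * jacksonKernel d φ ≤
      π ^ 4 / 4 * ∫ φ in (-π)..π, (1 - cos φ) ^ 2 * jacksonKernel d φ := by
  have := continuous_jacksonKernel d
  rw [← integral_const_mul]
  refine integral_mono_on (neg_le_self pi_pos.le) ((by fun_prop : Continuous _).intervalIntegrable _ _)
    ((by fun_prop : Continuous _).intervalIntegrable _ _) fun φ hφ => ?_
  rw [← mul_assoc]
  exact mul_le_mul_of_nonneg_right (pow_four_le_mul_one_sub_cos_sq (abs_le.mpr hφ))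
    (jacksonKernel_nonneg d φ)

theorem one_div_four_add_mul_pi_sq_div_le (d : ℕ) :
    1 / 4 + (d + 1) * π ^ 2 / (16 * (d + 2) ^ 2) ≤ 1 / 2 := by
  have hπ : π ^ 2 ≤ 16 := by nlinarith [pi_le_four, pi_pos]
  have : (d + 1) * π ^ 2 ≤ 4 * (d + 2) ^ 2 := by
    nlinarith [mul_le_mul_of_nonneg_left hπ (by positivity : (0 : ℝ) ≤ d + 1)]
  rw [← sub_nonneg]
  field_simp
  linarith

/-- `(1/π)·∫_{−π}^{π} φ⁴·u_d(φ) dφ ≤ (1/4 + (d+1)π²/(16(d+2)²))·π⁶/(d+2)³`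
and this quantity is at most `π⁶/(2(d+2)³)`, for `d ≥ 2`. -/
theorem jacksonKernel_fourth_moment (d : ℕ) (hd : 2 ≤ d) :
    (1 / π) * ∫ φ in (-π)..π, φ ^ 4 * jacksonKernel d φ ≤
      (1 / 4 + (d + 1) * π ^ 2 / (16 * (d + 2) ^ 2)) * π ^ 6 / (d + 2) ^ 3 ∧
    (1 / 4 + (d + 1) * π ^ 2 / (16 * (d + 2) ^ 2)) * π ^ 6 / (d + 2) ^ 3 ≤
      π ^ 6 / (2 * (d + 2) ^ 3) := by
  have hmoment := integral_pow_four_mul_jacksonKernel_le d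
  rw [integral_one_sub_cos_sq_mul_jacksonKernel hd] at hmoment
  set α := π / (d + 2) with hα
  have hc₀ : 0 ≤ 1 - cos α := by linarith [cos_le_one α]
  have hc₁ : 1 - cos α ≤ α ^ 2 / 2 := by linarith [one_sub_sq_div_two_le_cos (x := α)]
  constructor
  · calc (1 / π) * ∫ φ in (-π)..π, φ ^ 4 * jacksonKernel d φ
        ≤ (1 / π) * (π ^ 4 / 4 * (π * (2 * (1 - cos α) + (d + 1) * (1 - cos α) ^ 2) / (d + 2))) := by
          gcongr
      _ = π ^ 4 / 4 * (2 * (1 - cos α) + (d + 1) * (1 - cos α) ^ 2) / (d + 2) := by field_simp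
      _ ≤ π ^ 4 / 4 * (2 * (α ^ 2 / 2) + (d + 1) * (α ^ 2 / 2) ^ 2) / (d + 2) := by gcongr
      _ = (1 / 4 + (d + 1) * π ^ 2 / (16 * (d + 2) ^ 2)) * π ^ 6 / (d + 2) ^ 3 := by
          rw [hα]; field_simp; ring
  · calc (1 / 4 + (d + 1) * π ^ 2 / (16 * (d + 2) ^ 2)) * π ^ 6 / (d + 2) ^ 3
        ≤ 1 / 2 * π ^ 6 / (d + 2) ^ 3 := by gcongr; exact one_div_four_add_mul_pi_sq_div_le d
      _ = π ^ 6 / (2 * (d + 2) ^ 3) := by field_simp
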